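/- Let n ≥ 1, let U, A, B be 2^n × 2^n unitary matrices, let σ be a Hermitian 2^n × 2^n matrix with σ² = I, and fix j ∈ {1,…,n}. Define g(α) := C_LHST^{(j)}(U, A·e^{−iασ/2}·B). Then g is differentiable and satisfies the parameter-shift rule g'(α) = (1/2)( g(α + π/2) − g(α − π/2) ) for all α ∈ ℝ. -/

import Mathlib

open Matrix Kronecker Complex

noncomputable section

/-- The Hilbert-Schmidt test cost `C_HST(U,V) = 1 - |Tr(V†U)|²/d²` for `d × d` matrices. -/
def CHSTd (d : ℕ) (U V : Matrix (Fin d) (Fin d) ℂ) : ℝ :=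
  1 - ‖(Vᴴ * U).trace‖ ^ 2 / (d : ℝ) ^ 2

/-- The Hilbert-Schmidt test cost for unitaries on `n` qubits (`d = 2^n`). -/
def CHST (n : ℕ) (U V : Matrix (Fin n → Fin 2) (Fin n → Fin 2) ℂ) : ℝ :=
  1 - ‖(Vᴴ * U).trace‖ ^ 2 / ((2 : ℝ) ^ n) ^ 2

/-- The local channel `E_j(ρ) = Tr_{j̄}[ W (ρ_(j) ⊗ I/2^(n-1)) W† ]`, where `ρ` is placed on
qubit `j`, the maximally mixed state on the other qubits, and the partial trace is over all
qubits except `j`.  (The sum over `r` double-counts the assignments of the qubits other than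
`j`, whence the extra factor `1/2`.) -/
def Ej (n : ℕ) (j : Fin n) (W : Matrix (Fin n → Fin 2) (Fin n → Fin 2) ℂ)
    (ρ : Matrix (Fin 2) (Fin 2) ℂ) : Matrix (Fin 2) (Fin 2) ℂ :=
  Matrix.of fun a b =>
    (1 / 2 ^ (n - 1) : ℂ) * (1 / 2) *
      ∑ r : Fin n → Fin 2, ∑ s : Fin n → Fin 2, ∑ t : Fin n → Fin 2,
        (if Function.update s j 0 = Function.update t j 0 then
          W (Function.update r j a) s * ρ (s j) (t j) * star (W (Function.update r j b) t)
        else 0)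

/-- The two-qubit maximally entangled state `|Φ₂⁺⟩ = (|00⟩+|11⟩)/√2`. -/
def phi2 : (Fin 2 × Fin 2) → ℂ := fun p => if p.1 = p.2 then ((1 / Real.sqrt 2 : ℝ) : ℂ) else 0

/-- The projector `|Φ₂⁺⟩⟨Φ₂⁺|`. -/
def phi2Proj : Matrix (Fin 2 × Fin 2) (Fin 2 × Fin 2) ℂ :=
  Matrix.of fun p q => if p.1 = p.2 ∧ q.1 = q.2 then (1 / 2 : ℂ) else 0

/-- `(E ⊗ id)(ρ)` for a map `E` on one-qubit matrices and a two-qubit matrix `ρ`. -/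
def tensorId (E : Matrix (Fin 2) (Fin 2) ℂ → Matrix (Fin 2) (Fin 2) ℂ)
    (ρ : Matrix (Fin 2 × Fin 2) (Fin 2 × Fin 2) ℂ) :
    Matrix (Fin 2 × Fin 2) (Fin 2 × Fin 2) ℂ :=
  Matrix.of fun p q => ∑ a : Fin 2, ∑ b : Fin 2,
    ρ (a, p.2) (b, q.2) * E (Matrix.single a b 1) p.1 q.1

/-- The entanglement fidelity `F_e^(j) = ⟨Φ₂⁺|(E_j ⊗ id)(|Φ₂⁺⟩⟨Φ₂⁺|)|Φ₂⁺⟩`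
(as a complex number), with `W = U V†`. -/
def FeC (n : ℕ) (j : Fin n) (U V : Matrix (Fin n → Fin 2) (Fin n → Fin 2) ℂ) : ℂ :=
  star phi2 ⬝ᵥ (tensorId (Ej n j (U * Vᴴ)) phi2Proj).mulVec phi2

/-- The entanglement fidelity `F_e^(j)` (a real number). -/
def Fe (n : ℕ) (j : Fin n) (U V : Matrix (Fin n → Fin 2) (Fin n → Fin 2) ℂ) : ℝ :=
  (FeC n j U V).re

/-- The local Hilbert-Schmidt cost for qubit `j`: `C_LHST^(j)(U,V) = 1 - F_e^(j)`. -/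
def CLHSTj (n : ℕ) (j : Fin n) (U V : Matrix (Fin n → Fin 2) (Fin n → Fin 2) ℂ) : ℝ :=
  1 - Fe n j U V

/-- The local Hilbert-Schmidt cost `C_LHST(U,V) = (1/n) Σ_j C_LHST^(j)(U,V)`. -/
def CLHST (n : ℕ) (U V : Matrix (Fin n → Fin 2) (Fin n → Fin 2) ℂ) : ℝ :=
  (1 / n : ℝ) * ∑ j : Fin n, CLHSTj n j U V

end

noncomputable section

/-- The rotation gate `G(α) = e^{-iασ/2}` generated by `σ`, on `n` qubits. -/
def rotGateQ (n : ℕ) (σ : Matrix (Fin n → Fin 2) (Fin n → Fin 2) ℂ) (α : ℝ) :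
    Matrix (Fin n → Fin 2) (Fin n → Fin 2) ℂ :=
  NormedSpace.exp ((-(α / 2 : ℝ) * Complex.I : ℂ) • σ)

/-!
Since `σ² = 1`, the gate is `e^{-iβσ/2} = cos(β/2) - i sin(β/2) σ`, so `W = U V†` is
`cos(β/2) X + i sin(β/2) Y` for fixed matrices `X, Y`. The entanglement fidelity is the real part
of a sesquilinear form evaluated at `(W, W)`, hence a quadratic form in `(cos(β/2), sin(β/2))`;
by the half-angle formulas the cost is `K + P cos β + Q sin β`, and for such a function the
shift rule is the identity `cos(α ± π/2) = ∓ sin α`, `sin(α ± π/2) = ± cos α`.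
-/

theorem NormedSpace.exp_smul_of_mul_self_eq_one {𝔸 : Type*} [Ring 𝔸] [Algebra ℂ 𝔸]
    [TopologicalSpace 𝔸] [IsTopologicalRing 𝔸] [T2Space 𝔸] [ContinuousSMul ℂ 𝔸]
    {σ : 𝔸} (hσ : σ * σ = 1) (z : ℂ) :
    NormedSpace.exp (z • σ) = cosh z • 1 + sinh z • σ := by
  have heven : ∀ k : ℕ, σ ^ (2 * k) = 1 := fun k => by rw [pow_mul, sq, hσ, one_pow]
  rw [NormedSpace.exp_eq_tsum ℂ]
  refine HasSum.tsum_eq (HasSum.even_add_odd ?_ ?_)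
  · convert (hasSum_cosh z).smul_const (1 : 𝔸) using 2 with k
    rw [smul_pow, heven, smul_smul, div_eq_inv_mul]
  · convert (hasSum_sinh z).smul_const σ using 2 with k
    rw [smul_pow, pow_succ σ, heven, one_mul, smul_smul, div_eq_inv_mul]

theorem hasDerivAt_parameterShift {f : ℝ → ℝ} {K P Q : ℝ}
    (hf : ∀ β, f β = K + P * Real.cos β + Q * Real.sin β) (α : ℝ) :
    HasDerivAt f ((1 / 2) * (f (α + Real.pi / 2) - f (α - Real.pi / 2))) α := by
  have hderiv : HasDerivAt (fun β => K + P * Real.cos β + Q * Real.sin β)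
      (P * -Real.sin α + Q * Real.cos α) α :=
    (((Real.hasDerivAt_cos α).const_mul P).const_add K).add ((Real.hasDerivAt_sin α).const_mul Q)
  rw [funext hf]
  convert hderiv using 1
  simp only [Real.cos_add_pi_div_two, Real.sin_add_pi_div_two, Real.cos_sub_pi_div_two,
    Real.sin_sub_pi_div_two]
  ring

theorem LinearMap.exists_re_apply_cos_half_sin_half {M : Type*} [AddCommGroup M] [Module ℂ M]
    (S : M →ₗ[ℂ] M →ₗ⋆[ℂ] ℂ) (X Y : M) :
    ∃ K P Q : ℝ, ∀ β : ℝ,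
      let W := (Real.cos (β / 2) : ℂ) • X + (Real.sin (β / 2) * I : ℂ) • Y
      (S W W).re = K + P * Real.cos β + Q * Real.sin β := by
  refine ⟨((S X X).re + (S Y Y).re) / 2, ((S X X).re - (S Y Y).re) / 2,
    (I * (S Y X - S X Y)).re / 2, fun β => ?_⟩
  set c := Real.cos (β / 2)
  set s := Real.sin (β / 2)
  have hexpand : S ((c : ℂ) • X + (s * I : ℂ) • Y) ((c : ℂ) • X + (s * I : ℂ) • Y)
      = ((c ^ 2 : ℝ) : ℂ) * S X X + ((s ^ 2 : ℝ) : ℂ) * S Y Y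
        + ((c * s : ℝ) : ℂ) * (I * (S Y X - S X Y)) := by
    simp only [map_add, map_smul, map_smulₛₗ, LinearMap.add_apply, LinearMap.smul_apply,
      smul_eq_mul]
    rw [map_mul, conj_ofReal, conj_ofReal, conj_I]
    push_cast
    linear_combination (-(s : ℂ) ^ 2 * S Y Y) * I_sq
  have hc : c ^ 2 = 1 / 2 + Real.cos β / 2 := by
    rw [Real.cos_sq, mul_div_cancel₀ β two_ne_zero]
  have hs : s ^ 2 = 1 / 2 - Real.cos β / 2 := by
    linarith [Real.sin_sq_add_cos_sq (β / 2)]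
  have hcs : c * s = Real.sin β / 2 := by
    have := Real.sin_two_mul (β / 2)
    rw [mul_div_cancel₀ β two_ne_zero] at this
    linarith
  simp only [hexpand, add_re, re_ofReal_mul, hc, hs, hcs]
  ring

abbrev QubitOp (n : ℕ) := Matrix (Fin n → Fin 2) (Fin n → Fin 2) ℂ

/-- `Ej` with the two occurrences of `W` decoupled: `Ej n j W ρ = Ej₂ n j ρ W W`. -/
def Ej₂ (n : ℕ) (j : Fin n) (ρ : Matrix (Fin 2) (Fin 2) ℂ) :
    QubitOp n →ₗ[ℂ] QubitOp n →ₗ⋆[ℂ] Matrix (Fin 2) (Fin 2) ℂ :=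
  LinearMap.mk₂'ₛₗ (RingHom.id ℂ) (starRingEnd ℂ)
    (fun X Y => Matrix.of fun a b =>
      (1 / 2 ^ (n - 1) : ℂ) * (1 / 2) *
        ∑ r : Fin n → Fin 2, ∑ s : Fin n → Fin 2, ∑ t : Fin n → Fin 2,
          (if Function.update s j 0 = Function.update t j 0 then
            X (Function.update r j a) s * ρ (s j) (t j) * star (Y (Function.update r j b) t)
          else 0))
    (fun _ _ _ => by
      ext
      simp only [Matrix.add_apply, of_apply, add_mul, ite_add_zero, Finset.sum_add_distrib,
        mul_add])
    (fun _ _ _ => by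
      ext
      simp only [Matrix.smul_apply, of_apply, smul_eq_mul, Finset.mul_sum, RingHom.id_apply,
        mul_ite, mul_zero, mul_assoc, mul_left_comm _ (_ : ℂ)])
    (fun _ _ _ => by
      ext
      simp only [Matrix.add_apply, of_apply, star_add, mul_add, ite_add_zero,
        Finset.sum_add_distrib])
    (fun _ _ _ => by
      ext
      simp only [Matrix.smul_apply, of_apply, smul_eq_mul, Finset.mul_sum, star_mul',
        starRingEnd_apply, mul_ite, mul_zero, mul_assoc, mul_left_comm _ (_ : ℂ)])

theorem star_phi2_dotProduct_tensorId_mulVec_phi2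
    (E : Matrix (Fin 2) (Fin 2) ℂ → Matrix (Fin 2) (Fin 2) ℂ) :
    star phi2 ⬝ᵥ (tensorId E phi2Proj) *ᵥ phi2 = (1 / 4) * ∑ a, ∑ b, E (single a b 1) a b := by
  simp only [dotProduct, Pi.star_apply, phi2, one_div, ofReal_inv, RCLike.star_def, mulVec,
    tensorId, phi2Proj, of_apply, ite_mul, zero_mul, Fin.sum_univ_two, Fin.isValue, mul_ite,
    mul_zero, Fintype.sum_prod_type, Finset.sum_ite_eq, Finset.mem_univ, ↓reduceIte, and_true,
    one_ne_zero, and_false, add_zero, zero_ne_one, zero_add, map_inv₀, conj_ofReal, map_zero]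
  have h : ((Real.sqrt 2 : ℝ) : ℂ) ^ 2 = 2 := by norm_cast; simp
  field_simp
  linear_combination -2 * (E (single 0 0 1) 0 0 + E (single 0 1 1) 0 1 + E (single 1 0 1) 1 0 +
    E (single 1 1 1) 1 1) * h

def feForm (n : ℕ) (j : Fin n) : QubitOp n →ₗ[ℂ] QubitOp n →ₗ⋆[ℂ] ℂ :=
  (1 / 4 : ℂ) • ∑ a, ∑ b, (Ej₂ n j (single a b 1)).compr₂ₛₗ (entryLinearMap ℂ ℂ a b)

theorem FeC_eq_feForm (n : ℕ) (j : Fin n) (U V : QubitOp n) :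
    FeC n j U V = feForm n j (U * Vᴴ) (U * Vᴴ) := by
  rw [FeC, star_phi2_dotProduct_tensorId_mulVec_phi2, feForm]
  simp only [LinearMap.smul_apply, LinearMap.sum_apply, LinearMap.compr₂ₛₗ_apply,
    entryLinearMap_apply, smul_eq_mul, Finset.mul_sum]
  rfl

theorem rotGateQ_conjTranspose {n : ℕ} {σ : QubitOp n} (hherm : σᴴ = σ) (hinv : σ * σ = 1)
    (β : ℝ) :
    (rotGateQ n σ β)ᴴ = (Real.cos (β / 2) : ℂ) • 1 + (Real.sin (β / 2) * I : ℂ) • σ := by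
  rw [rotGateQ, NormedSpace.exp_smul_of_mul_self_eq_one hinv, neg_mul, cosh_neg, sinh_neg,
    cosh_mul_I, sinh_mul_I, ← ofReal_cos, ← ofReal_sin]
  simp only [conjTranspose_add, conjTranspose_smul, conjTranspose_one, hherm, star_neg,
    star_mul', Complex.star_def, conj_ofReal, conj_I, mul_neg, neg_neg]

theorem mul_conjTranspose_mul_rotGateQ_mul {n : ℕ} {σ : QubitOp n} (hherm : σᴴ = σ)
    (hinv : σ * σ = 1) (U A B : QubitOp n) (β : ℝ) :
    U * (A * rotGateQ n σ β * B)ᴴ =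
      (Real.cos (β / 2) : ℂ) • (U * Bᴴ * Aᴴ) + (Real.sin (β / 2) * I : ℂ) • (U * Bᴴ * σ * Aᴴ) := by
  simp only [conjTranspose_mul, rotGateQ_conjTranspose hherm hinv, Matrix.mul_add,
    Matrix.add_mul, Matrix.mul_smul, Matrix.smul_mul, Matrix.mul_one, Matrix.mul_assoc]

theorem stmt16_general (n : ℕ) (j : Fin n)
    (U A B σ : Matrix (Fin n → Fin 2) (Fin n → Fin 2) ℂ)
    (hherm : σᴴ = σ) (hinv : σ * σ = 1) (α : ℝ) :
    HasDerivAt (fun β : ℝ => CLHSTj n j U (A * rotGateQ n σ β * B))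
      ((1 / 2) * (CLHSTj n j U (A * rotGateQ n σ (α + Real.pi / 2) * B) -
        CLHSTj n j U (A * rotGateQ n σ (α - Real.pi / 2) * B))) α := by
  obtain ⟨K, P, Q, hKPQ⟩ :=
    (feForm n j).exists_re_apply_cos_half_sin_half (U * Bᴴ * Aᴴ) (U * Bᴴ * σ * Aᴴ)
  refine hasDerivAt_parameterShift (K := 1 - K) (P := -P) (Q := -Q) (fun β => ?_) α
  rw [CLHSTj, Fe, FeC_eq_feForm, mul_conjTranspose_mul_rotGateQ_mul hherm hinv, hKPQ β]
  ring

/-- **parameter-shift rule for `C_LHST^(j)`.** For unitaries `U,A,B` on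
`n ≥ 1` qubits, a Hermitian involution `σ`, and a fixed qubit `j`, the map
`g(α) = C_LHST^(j)(U, A e^{−iασ/2} B)` is differentiable with
`g'(α) = (1/2)(g(α + π/2) − g(α − π/2))` for all real `α`. -/
theorem stmt16 (n : ℕ) (hn : 1 ≤ n) (j : Fin n)
    (U A B σ : Matrix (Fin n → Fin 2) (Fin n → Fin 2) ℂ)
    (hU : U ∈ Matrix.unitaryGroup (Fin n → Fin 2) ℂ)
    (hA : A ∈ Matrix.unitaryGroup (Fin n → Fin 2) ℂ)
    (hB : B ∈ Matrix.unitaryGroup (Fin n → Fin 2) ℂ)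
    (hherm : σᴴ = σ) (hinv : σ * σ = 1) (α : ℝ) :
    HasDerivAt (fun β : ℝ => CLHSTj n j U (A * rotGateQ n σ β * B))
      ((1 / 2) * (CLHSTj n j U (A * rotGateQ n σ (α + Real.pi / 2) * B) -
        CLHSTj n j U (A * rotGateQ n σ (α - Real.pi / 2) * B))) α :=
  stmt16_general n j U A B σ hherm hinv α

end
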